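/- arXiv:1712.05218 — 2 statements merged into one kernel-verified Lean document; each statement's English description precedes it below -/
import Mathlib

section
/- Let (X,d) be a metric space with depot s ∈ X, let V ⊆ X be a finite set of clients, and let τ : V → ℕ with τ(v) ≥ 1. Define τ'(v) = 2^⌊log₂ τ(v)⌋ (τ rounded down to a power of 2). Then the min-avg value of the instance (V,τ') is at most 2 times the min-avg value of the instance (V,τ). -/
open scoped BigOperators

/-- A schedule on the client set `V` (day `k ≥ 1` visits `J k ⊆ V`) is feasible for
turnover times `τ`: every client `v ∈ V` is visited in every window of `τ v` days. -/
def FeasibleOn {X : Type*} (V : Finset X) (τ : X → ℕ) (J : ℕ → Finset X) : Prop :=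
  (∀ k : ℕ, J k ⊆ V) ∧ ∀ v ∈ V, ∀ t : ℕ, ∃ k : ℕ, t < k ∧ k ≤ t + τ v ∧ v ∈ J k

/-- The cost of the route `s, v₁, …, v_r, s` where `l = [v₁, …, v_r]`. -/
def routeLen {X : Type*} (d : X → X → ℝ) (s : X) (l : List X) : ℝ :=
  (List.zip (s :: l) (l ++ [s])).foldr (fun p acc => d p.1 p.2 + acc) 0

/-- The tour cost of a finite set `S`: the minimum over all orderings `v₁,…,v_r` of the
elements of `S` of `d s v₁ + ∑ d vᵢ vᵢ₊₁ + d v_r s`, with `c ∅ = 0`. -/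
noncomputable def tourCost {X : Type*} [DecidableEq X] (d : X → X → ℝ) (s : X)
    (S : Finset X) : ℝ :=
  if S = ∅ then 0
  else sInf {x : ℝ | ∃ l : List X, l.Nodup ∧ l.toFinset = S ∧ x = routeLen d s l}

/-- The min-avg value of the instance `(V, τ)` in a metric space with depot `s`:
the infimum over feasible periodic schedules of the average daily tour cost. -/
noncomputable def minAvgVal {X : Type*} [MetricSpace X] [DecidableEq X] (s : X)
    (V : Finset X) (τ : X → ℕ) : ℝ :=
  sInf {x : ℝ | ∃ (J : ℕ → Finset X) (ℓ : ℕ), 1 ≤ ℓ ∧ (∀ k : ℕ, J (k + ℓ) = J k) ∧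
    FeasibleOn V τ J ∧
    x = (∑ k ∈ Finset.Icc 1 ℓ, tourCost dist s (J k)) / (ℓ : ℝ)}

/-!
Merge days `2k` and `2k + 1` of a feasible `ℓ`-periodic schedule `J` into day `k`. A window
of `τ' v = 2 ^ ⌊log₂ τ v⌋` merged days covers `2 τ' v ≥ τ v` days of `J`, so the merged
schedule is feasible for `τ'`, and it is again `ℓ`-periodic. Tour cost is subadditive
(run both tours one after the other and shortcut the repeated clients), so one period of the
merged schedule costs at most two periods of `J`, i.e. twice one period of `J`.
-/

open Finset Function

section Periodic

variable {M : Type*} [AddCommMonoid M]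

theorem Finset.sum_range_two_mul (f : ℕ → M) (n : ℕ) :
    ∑ i ∈ range (2 * n), f i = ∑ i ∈ range n, (f (2 * i) + f (2 * i + 1)) := by
  induction n with
  | zero => simp
  | succ n ih =>
    rw [Nat.mul_succ, sum_range_succ, sum_range_succ, ih, sum_range_succ, add_assoc]

theorem Function.Periodic.sum_range_two_mul {f : ℕ → M} {n : ℕ} (h : Periodic f n) :
    ∑ i ∈ range (2 * n), f i = ∑ i ∈ range n, f i + ∑ i ∈ range n, f i := by
  rw [two_mul, sum_range_add]
  simp only [add_comm n, h _]

theorem Function.Periodic.sum_Icc_one_eq_sum_range {f : ℕ → M} {n : ℕ} (h : Periodic f n) :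
    ∑ i ∈ Icc 1 n, f i = ∑ i ∈ range n, f i := by
  cases n with
  | zero => simp
  | succ n =>
    rw [sum_Icc_succ_top (by omega), sum_range_succ', ← h 0, zero_add,
      range_eq_Ico, sum_Ico_add' f 0 n 1, zero_add, Ico_add_one_right_eq_Icc]

end Periodic

section Route

variable {X : Type*}

def pathLength (d : X → X → ℝ) : List X → ℝ
  | [] => 0
  | [_] => 0
  | a :: b :: t => d a b + pathLength d (b :: t)

theorem pathLength_cons_cons (d : X → X → ℝ) (a b : X) (t : List X) :
    pathLength d (a :: b :: t) = d a b + pathLength d (b :: t) := rfl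

theorem routeLen_eq_pathLength (d : X → X → ℝ) (s : X) (l : List X) :
    routeLen d s l = pathLength d (s :: (l ++ [s])) := by
  suffices ∀ a : X, (List.zip (a :: l) (l ++ [s])).foldr (fun p acc => d p.1 p.2 + acc) 0
      = pathLength d (a :: (l ++ [s])) from this s
  induction l with
  | nil => simp [pathLength]
  | cons x t ih =>
    intro a
    simp only [List.cons_append, List.zip_cons_cons, List.foldr_cons, ih x, pathLength_cons_cons]

variable [PseudoMetricSpace X]

theorem pathLength_nonneg : ∀ l : List X, 0 ≤ pathLength dist l
  | [] | [_] => le_rfl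
  | _ :: b :: t => add_nonneg dist_nonneg (pathLength_nonneg (b :: t))

theorem pathLength_cons_le (a x : X) :
    ∀ l : List X, pathLength dist (a :: l) ≤ dist a x + pathLength dist (x :: l)
  | [] => by simp [pathLength]
  | b :: t => by
    simp only [pathLength_cons_cons]
    linarith [dist_triangle a x b]

theorem pathLength_le_of_sublist {l' l : List X} (h : l'.Sublist l) (a b : X) :
    pathLength dist (a :: (l' ++ [b])) ≤ pathLength dist (a :: (l ++ [b])) := by
  induction h generalizing a with
  | slnil => exact le_rfl
  | @cons l₁ l₂ x _ ih =>
    rw [List.cons_append, pathLength_cons_cons]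
    linarith [pathLength_cons_le a x (l₁ ++ [b]), ih x]
  | @cons_cons l₁ l₂ x _ ih =>
    simp only [List.cons_append, pathLength_cons_cons]
    linarith [ih x]

theorem pathLength_append_le (s : X) (l₂ : List X) :
    ∀ (l₁ : List X) (a : X), pathLength dist (a :: (l₁ ++ l₂ ++ [s])) ≤
      pathLength dist (a :: (l₁ ++ [s])) + pathLength dist (s :: (l₂ ++ [s]))
  | [], a => by
    simpa [pathLength] using pathLength_cons_le a s (l₂ ++ [s])
  | x :: t, a => by
    simp only [List.cons_append, pathLength_cons_cons]
    linarith [pathLength_append_le s l₂ t x]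

theorem routeLen_nonneg (s : X) (l : List X) : 0 ≤ routeLen dist s l := by
  rw [routeLen_eq_pathLength]
  exact pathLength_nonneg _

theorem routeLen_le_of_sublist (s : X) {l' l : List X} (h : l'.Sublist l) :
    routeLen dist s l' ≤ routeLen dist s l := by
  simpa only [routeLen_eq_pathLength] using pathLength_le_of_sublist h s s

theorem routeLen_append_le (s : X) (l₁ l₂ : List X) :
    routeLen dist s (l₁ ++ l₂) ≤ routeLen dist s l₁ + routeLen dist s l₂ := by
  simpa only [routeLen_eq_pathLength] using pathLength_append_le s l₂ l₁ s

end Route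

theorem le_csInf_add_csInf {s t : Set ℝ} (hs : s.Nonempty) (ht : t.Nonempty) {c : ℝ}
    (h : ∀ a ∈ s, ∀ b ∈ t, c ≤ a + b) : c ≤ sInf s + sInf t := by
  rw [← sub_le_iff_le_add]
  refine le_csInf hs fun a ha => ?_
  rw [sub_le_comm]
  exact le_csInf ht fun b hb => by linarith [h a ha b hb]

section TourCost

variable {X : Type*} [DecidableEq X]

@[simp]
theorem tourCost_empty (d : X → X → ℝ) (s : X) : tourCost d s ∅ = 0 := if_pos rfl

variable [PseudoMetricSpace X]

theorem tourCost_nonneg (s : X) (S : Finset X) : 0 ≤ tourCost dist s S := by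
  unfold tourCost
  split_ifs
  · exact le_rfl
  · exact Real.sInf_nonneg (by rintro _ ⟨l, -, -, rfl⟩; exact routeLen_nonneg s l)

theorem tourCost_le_routeLen (s : X) {l : List X} (hl : l.Nodup) :
    tourCost dist s l.toFinset ≤ routeLen dist s l := by
  unfold tourCost
  split_ifs
  · exact routeLen_nonneg s l
  · exact csInf_le ⟨0, by rintro _ ⟨l, -, -, rfl⟩; exact routeLen_nonneg s l⟩ ⟨l, hl, rfl, rfl⟩

theorem tourCost_union_le (s : X) (A B : Finset X) :
    tourCost dist s (A ∪ B) ≤ tourCost dist s A + tourCost dist s B := by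
  rcases eq_or_ne A ∅ with rfl | hA
  · simp
  rcases eq_or_ne B ∅ with rfl | hB
  · simp
  conv_rhs => rw [tourCost, tourCost, if_neg hA, if_neg hB]
  apply le_csInf_add_csInf
  · exact ⟨_, A.toList, A.nodup_toList, A.toList_toFinset, rfl⟩
  · exact ⟨_, B.toList, B.nodup_toList, B.toList_toFinset, rfl⟩
  rintro _ ⟨la, hla, rfl, rfl⟩ _ ⟨lb, hlb, rfl, rfl⟩
  set lb' := lb.filter (· ∉ la)
  have hnodup : (la ++ lb').Nodup :=
    hla.append (hlb.filter _) fun x hx hx' => by simp_all [lb']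
  have hunion : (la ++ lb').toFinset = la.toFinset ∪ lb.toFinset := by
    ext x
    by_cases hx : x ∈ la <;> simp [lb', hx]
  calc tourCost dist s (la.toFinset ∪ lb.toFinset)
      ≤ routeLen dist s (la ++ lb') := hunion ▸ tourCost_le_routeLen s hnodup
    _ ≤ routeLen dist s la + routeLen dist s lb' := routeLen_append_le s la lb'
    _ ≤ routeLen dist s la + routeLen dist s lb := by
      gcongr
      exact routeLen_le_of_sublist s List.filter_sublist

end TourCost

section MergeDays

variable {X : Type*} [DecidableEq X]

def mergeDays (J : ℕ → Finset X) (k : ℕ) : Finset X := J (2 * k) ∪ J (2 * k + 1)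

theorem Function.Periodic.mergeDays {J : ℕ → Finset X} {ℓ : ℕ} (h : Periodic J ℓ) :
    Periodic (mergeDays J) ℓ := fun k => by
  have h2 : Periodic J (2 * ℓ) := by simpa using h.nat_mul 2
  simp only [_root_.mergeDays, mul_add, add_right_comm _ (2 * ℓ), h2 _]

theorem FeasibleOn.mergeDays {V : Finset X} {τ τ' : X → ℕ} {J : ℕ → Finset X}
    (h : FeasibleOn V τ J) (hτ : ∀ v ∈ V, τ v ≤ 2 * τ' v) :
    FeasibleOn V τ' (mergeDays J) := by
  refine ⟨fun k => union_subset (h.1 _) (h.1 _), fun v hv t => ?_⟩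
  obtain ⟨m, hlt, hle, hm⟩ := h.2 v hv (2 * t + 1)
  have := hτ v hv
  rcases Nat.even_or_odd' m with ⟨k, rfl | rfl⟩
  · exact ⟨k, by omega, by omega, mem_union_left _ hm⟩
  · exact ⟨k, by omega, by omega, mem_union_right _ hm⟩

theorem sum_tourCost_mergeDays_le [PseudoMetricSpace X] (s : X) {J : ℕ → Finset X} {ℓ : ℕ}
    (h : Periodic J ℓ) :
    ∑ k ∈ Icc 1 ℓ, tourCost dist s (mergeDays J k) ≤
      2 * ∑ k ∈ Icc 1 ℓ, tourCost dist s (J k) := by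
  have hc : Periodic (fun k => tourCost dist s (J k)) ℓ := h.comp (tourCost dist s)
  calc ∑ k ∈ Icc 1 ℓ, tourCost dist s (mergeDays J k)
      = ∑ k ∈ range ℓ, tourCost dist s (mergeDays J k) :=
        (h.mergeDays.comp (tourCost dist s)).sum_Icc_one_eq_sum_range
    _ ≤ ∑ k ∈ range ℓ, (tourCost dist s (J (2 * k)) + tourCost dist s (J (2 * k + 1))) :=
        sum_le_sum fun k _ => tourCost_union_le s _ _
    _ = ∑ k ∈ range (2 * ℓ), tourCost dist s (J k) := (sum_range_two_mul (fun k => tourCost dist s (J k)) ℓ).symm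
    _ = 2 * ∑ k ∈ Icc 1 ℓ, tourCost dist s (J k) := by
        rw [hc.sum_range_two_mul, hc.sum_Icc_one_eq_sum_range, two_mul]

end MergeDays

section MinAvgVal

variable {X : Type*} [MetricSpace X] [DecidableEq X] {s : X} {V : Finset X} {τ : X → ℕ}

theorem minAvgVal_le {J : ℕ → Finset X} {ℓ : ℕ} (hℓ : 1 ≤ ℓ) (hJ : Periodic J ℓ)
    (hfeas : FeasibleOn V τ J) :
    minAvgVal s V τ ≤ (∑ k ∈ Icc 1 ℓ, tourCost dist s (J k)) / ℓ := by
  refine csInf_le ⟨0, ?_⟩ ⟨J, ℓ, hℓ, hJ, hfeas, rfl⟩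
  rintro _ ⟨J, ℓ, -, -, -, rfl⟩
  exact div_nonneg (sum_nonneg fun k _ => tourCost_nonneg s (J k)) ℓ.cast_nonneg

theorem le_minAvgVal (hτ : ∀ v ∈ V, 1 ≤ τ v) {c : ℝ}
    (h : ∀ (J : ℕ → Finset X) (ℓ : ℕ), 1 ≤ ℓ → Periodic J ℓ → FeasibleOn V τ J →
      c ≤ (∑ k ∈ Icc 1 ℓ, tourCost dist s (J k)) / ℓ) :
    c ≤ minAvgVal s V τ := by
  have hconst : FeasibleOn V τ fun _ => V :=
    ⟨fun _ => Subset.rfl, fun v hv t => ⟨t + 1, by omega, by have := hτ v hv; omega, hv⟩⟩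
  refine le_csInf ⟨_, fun _ => V, 1, le_rfl, fun _ => rfl, hconst, rfl⟩ ?_
  rintro _ ⟨J, ℓ, hℓ, hJ, hfeas, rfl⟩
  exact h J ℓ hℓ hJ hfeas

end MinAvgVal

/-- Rounding the turnover times down to powers of 2 at most doubles the min-avg value. -/
theorem minAvg_rounding_powers_of_two {X : Type*} [MetricSpace X] [DecidableEq X]
    (s : X) (V : Finset X) (τ : X → ℕ) (hτ : ∀ v ∈ V, 1 ≤ τ v) :
    minAvgVal s V (fun v => 2 ^ Nat.log 2 (τ v)) ≤ 2 * minAvgVal s V τ := by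
  have hround : ∀ v ∈ V, τ v ≤ 2 * 2 ^ Nat.log 2 (τ v) := fun v _ => by
    simpa [pow_succ'] using (Nat.lt_pow_succ_log_self one_lt_two (τ v)).le
  rw [← div_le_iff₀' two_pos]
  refine le_minAvgVal hτ fun J ℓ hℓ hJ hfeas => ?_
  have hℓ' : (0 : ℝ) < ℓ := by exact_mod_cast hℓ
  rw [div_le_iff₀' two_pos, ← mul_div_assoc, le_div_iff₀ hℓ']
  calc minAvgVal s V (fun v => 2 ^ Nat.log 2 (τ v)) * ℓ
      ≤ ∑ k ∈ Icc 1 ℓ, tourCost dist s (mergeDays J k) :=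
        (le_div_iff₀ hℓ').1 (minAvgVal_le hℓ hJ.mergeDays (hfeas.mergeDays hround))
    _ ≤ 2 * ∑ k ∈ Icc 1 ℓ, tourCost dist s (J k) := sum_tourCost_mergeDays_le s hJ
end

section
/- Let (G,τ) be a tree instance of RFTT with edge weights c, depot s, and tt-weights q(e) = min_{j ∈ D(e)} τ(j). Then every feasible periodic schedule J with period ℓ satisfies (1/ℓ) Σ_{k=1}^{ℓ} c(J(k)) ≥ 2 Σ_{e ∈ E} c(e)/q(e), where tour costs are taken in the shortest-path metric of G with depot s. -/
/-!
Below an edge `e` lie the clients `D(e)`, which `e` separates from the depot `s`. A closed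
tour from `s` visiting a client of `D(e)` therefore crosses `e` at least twice, paying at
least `2 c(e)` on it. A client `j ∈ D(e)` with `τ(j) = q(e)` is visited in every window of
`q(e)` days, so periodicity forces at least `ℓ / q(e)` of the `ℓ` days of a period to visit
`D(e)`. Summing `2 c(e) ℓ / q(e)` over the edges bounds the cost of one period.
-/

open scoped BigOperators

/-- The unique path between `u` and `v` in a tree, as a walk. -/
noncomputable def treePath {α : Type*} {G : SimpleGraph α} (hG : G.IsTree) (u v : α) :
    G.Walk u v :=
  (hG.existsUnique_path u v).exists.choose

/-- The weighted shortest-path (tree) metric: the total weight of the unique path. -/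
noncomputable def treeDist {α : Type*} {G : SimpleGraph α} (hG : G.IsTree)
    (w : Sym2 α → ℝ) (u v : α) : ℝ :=
  ((treePath hG u v).edges.map w).sum

/-- Feasibility for a rooted tree instance with depot `s`: every vertex `v ≠ s`
(i.e. every client) is visited in every window of `τ v` consecutive days. -/
def FeasibleTree {α : Type*} (s : α) (τ : α → ℕ) (J : ℕ → Finset α) : Prop :=
  ∀ v : α, v ≠ s → ∀ t : ℕ, ∃ k : ℕ, t < k ∧ k ≤ t + τ v ∧ v ∈ J k

/-- The tt-weight `q(e) = min_{j ∈ D(e)} τ j` of an edge `e` of the tree rooted at the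
depot `s`, where `D(e)` is the set of clients `j` lying below `e`, i.e. those `j ≠ s`
such that `e` lies on the path from `s` to `j`. -/
noncomputable def ttWeight {α : Type*} {G : SimpleGraph α} (hG : G.IsTree) (s : α)
    (τ : α → ℕ) (e : Sym2 α) : ℕ :=
  sInf {m : ℕ | ∃ j : α, j ≠ s ∧ e ∈ (treePath hG s j).edges ∧ m = τ j}

open SimpleGraph Finset

section TreePath

variable {α : Type*} {G : SimpleGraph α} (hG : G.IsTree)

theorem treePath_isPath (u v : α) : (treePath hG u v).IsPath :=
  (hG.existsUnique_path u v).exists.choose_spec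

theorem SimpleGraph.Walk.IsPath.eq_treePath {u v : α} {p : G.Walk u v} (hp : p.IsPath) :
    p = treePath hG u v :=
  (hG.existsUnique_path u v).unique hp (treePath_isPath hG u v)

theorem treePath_self (u : α) : treePath hG u u = .nil :=
  (Walk.IsPath.nil.eq_treePath hG).symm

theorem treeDist_self (w : Sym2 α → ℝ) (u : α) : treeDist hG w u u = 0 := by
  simp [treeDist, treePath_self]

variable [DecidableEq α]

theorem mem_edges_treePath_iff {e : Sym2 α} {u v : α} :
    e ∈ (treePath hG u v).edges ↔ ¬(G.deleteEdges {e}).Reachable u v := by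
  induction e using Sym2.ind with
  | _ a b =>
    rw [reachable_deleteEdges_iff_exists_walk, not_exists_not]
    refine ⟨fun he p => ?_, fun h => h _⟩
    by_contra hp
    rw [← p.bypass_isPath.eq_treePath hG] at he
    exact hp (p.edges_bypass_subset_edges he)

theorem mem_edges_treePath_of_not_iff (s : α) {e : Sym2 α} {x y : α}
    (h : ¬(e ∈ (treePath hG s x).edges ↔ e ∈ (treePath hG s y).edges)) :
    e ∈ (treePath hG x y).edges := by
  simp only [mem_edges_treePath_iff hG] at h ⊢
  exact fun hxy => h (not_congr ⟨fun hsx => hsx.trans hxy, fun hsy => hsy.trans hxy.symm⟩)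

theorem exists_ne_mem_edges_treePath (s : α) {e : Sym2 α} (he : e ∈ G.edgeSet) :
    ∃ j, j ≠ s ∧ e ∈ (treePath hG s j).edges := by
  induction e using Sym2.ind with
  | _ a b =>
    have hab : ¬(G.deleteEdges {s(a, b)}).Reachable a b :=
      isBridge_iff.1 (isAcyclic_iff_forall_isBridge.1 hG.isAcyclic he)
    have hs : ∃ j, ¬(G.deleteEdges {s(a, b)}).Reachable s j := by
      by_contra! h
      exact hab ((h a).symm.trans (h b))
    obtain ⟨j, hj⟩ := hs
    exact ⟨j, by rintro rfl; exact hj .rfl, (mem_edges_treePath_iff hG).2 hj⟩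

theorem treeDist_eq_sum [Fintype α] [DecidableRel G.Adj] (w : Sym2 α → ℝ) (x y : α) :
    treeDist hG w x y =
      ∑ e ∈ G.edgeFinset, if e ∈ (treePath hG x y).edges then w e else 0 := by
  rw [treeDist, ← List.sum_toFinset w (treePath_isPath hG x y).isTrail.edges_nodup,
    ← sum_filter]
  congr 1
  ext e
  simpa using fun he => (treePath hG x y).edges_subset_edgeSet he

end TreePath

section ChainLen

variable {X : Type*}

def chainLen (d : X → X → ℝ) : X → List X → X → ℝ
  | x, [], y => d x y
  | x, a :: l, y => d x a + chainLen d a l y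

theorem routeLen_eq_chainLen (d : X → X → ℝ) (s : X) (l : List X) :
    routeLen d s l = chainLen d s l s := by
  suffices ∀ x, (List.zip (x :: l) (l ++ [s])).foldr (fun p acc => d p.1 p.2 + acc) 0 =
      chainLen d x l s from this s
  induction l with
  | nil => simp [chainLen]
  | cons a l ih => simp [chainLen, ← ih]

theorem chainLen_finset_sum {ι : Type*} (t : Finset ι) (d : ι → X → X → ℝ) (x : X)
    (l : List X) (y : X) :
    chainLen (fun a b => ∑ i ∈ t, d i a b) x l y = ∑ i ∈ t, chainLen (d i) x l y := by
  induction l generalizing x with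
  | nil => rfl
  | cons a l ih => simp only [chainLen, ih, sum_add_distrib]

variable {d : X → X → ℝ} (hd : ∀ a b, 0 ≤ d a b)
include hd

theorem chainLen_nonneg (x : X) (l : List X) (y : X) : 0 ≤ chainLen d x l y := by
  induction l generalizing x with
  | nil => exact hd x y
  | cons a l ih => exact add_nonneg (hd x a) (ih a)

variable {P : X → Prop} {c : ℝ} (hcross : ∀ a b, ¬(P a ↔ P b) → c ≤ d a b)
include hcross

theorem le_chainLen_of_not_iff {x y : X} (l : List X) (hxy : ¬(P x ↔ P y)) :
    c ≤ chainLen d x l y := by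
  induction l generalizing x with
  | nil => exact hcross x y hxy
  | cons a l ih =>
    rw [chainLen]
    by_cases hxa : P x ↔ P a
    · linarith [hd x a, ih (fun hay => hxy (hxa.trans hay))]
    · linarith [hcross x a hxa, chainLen_nonneg hd a l y]

theorem two_mul_le_chainLen {x y : X} {l : List X} (hx : ¬P x) (hy : ¬P y)
    (hl : ∃ v ∈ l, P v) : 2 * c ≤ chainLen d x l y := by
  induction l generalizing x with
  | nil => simp at hl
  | cons a l ih =>
    rw [chainLen]
    by_cases ha : P a
    · linarith [hcross x a (by tauto), le_chainLen_of_not_iff hd hcross l (x := a) (by tauto)]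
    · have hl' : ∃ v ∈ l, P v := by
        obtain ⟨v, hv, hPv⟩ := hl
        exact ⟨v, (List.mem_cons.1 hv).resolve_left (by rintro rfl; exact ha hPv), hPv⟩
      linarith [hd x a, ih ha hl']

end ChainLen

theorem le_tourCost {X : Type*} [DecidableEq X] {d : X → X → ℝ} {s : X} (hs : d s s = 0)
    {S : Finset X} {b : ℝ} (h : ∀ l : List X, l.toFinset = S → b ≤ routeLen d s l) :
    b ≤ tourCost d s S := by
  rw [tourCost]
  split_ifs with hS
  · simpa [routeLen, hs] using h [] (by simp [hS])
  · exact le_csInf ⟨_, S.toList, S.nodup_toList, S.toList_toFinset, rfl⟩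
      (by rintro _ ⟨l, -, hl, rfl⟩; exact h l hl)

section TourCost

variable {α : Type*} [Fintype α] [DecidableEq α] {G : SimpleGraph α} [DecidableRel G.Adj]
  (hG : G.IsTree) {w : Sym2 α → ℝ} (hw : ∀ e ∈ G.edgeSet, 0 ≤ w e) (s : α)
include hw

theorem sum_le_routeLen_treeDist (l : List α) :
    ∑ e ∈ G.edgeFinset, (if ∃ v ∈ l, e ∈ (treePath hG s v).edges then 2 * w e else 0) ≤
      routeLen (treeDist hG w) s l := by
  rw [routeLen_eq_chainLen, funext₂ (treeDist_eq_sum hG w), chainLen_finset_sum]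
  refine sum_le_sum fun e he => ?_
  have hwe : 0 ≤ w e := hw e (mem_edgeFinset.1 he)
  have hd : ∀ a b, 0 ≤ if e ∈ (treePath hG a b).edges then w e else 0 := fun a b => by
    split_ifs <;> simp [hwe]
  have hcross : ∀ a b, ¬(e ∈ (treePath hG s a).edges ↔ e ∈ (treePath hG s b).edges) →
      w e ≤ if e ∈ (treePath hG a b).edges then w e else 0 := fun a b hab => by
    rw [if_pos (mem_edges_treePath_of_not_iff hG s hab)]
  have hs : e ∉ (treePath hG s s).edges := by simp [treePath_self]
  split_ifs with hl
  · exact two_mul_le_chainLen hd hcross hs hs hl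
  · exact chainLen_nonneg hd s l s

theorem sum_le_tourCost_treeDist (S : Finset α) :
    ∑ e ∈ G.edgeFinset, (if ∃ v ∈ S, e ∈ (treePath hG s v).edges then 2 * w e else 0) ≤
      tourCost (treeDist hG w) s S :=
  le_tourCost (treeDist_self hG w s) fun l hl => by
    simpa [← hl] using sum_le_routeLen_treeDist hG hw s l

end TourCost

theorem le_mul_count_of_periodic {P : ℕ → Prop} [DecidablePred P] {ℓ q : ℕ}
    (hP : Function.Periodic P ℓ) (hwin : ∀ t, ∃ k, t < k ∧ k ≤ t + q ∧ P k) :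
    ℓ ≤ q * Nat.count P ℓ := by
  -- count the pairs `(t, i) ∈ [0, ℓ) × [0, q)` with `P (t + 1 + i)` in both orders
  calc ℓ = ∑ _t ∈ range ℓ, 1 := by simp
    _ ≤ ∑ t ∈ range ℓ, #{i ∈ range q | P (t + 1 + i)} := by
      refine sum_le_sum fun t _ => card_pos.2 ?_
      obtain ⟨k, htk, hkt, hk⟩ := hwin t
      exact ⟨k - (t + 1), mem_filter.2 ⟨mem_range.2 (by omega), by rwa [Nat.add_sub_cancel' htk]⟩⟩
    _ = ∑ i ∈ range q, #{k ∈ Ico (i + 1) (i + 1 + ℓ) | P k} := by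
      simp only [card_filter, sum_Ico_eq_sum_range, add_tsub_cancel_left]
      rw [sum_comm]
      refine sum_congr rfl fun i _ => sum_congr rfl fun t _ => ?_
      congr 2
      omega
    _ = q * Nat.count P ℓ := by
      simp [Nat.filter_Ico_card_eq_of_periodic _ _ P hP]

theorem FeasibleTree.le_mul_card_filter_mem {α : Type*} [DecidableEq α] {s : α} {τ : α → ℕ}
    {J : ℕ → Finset α} {ℓ : ℕ} (hfeas : FeasibleTree s τ J) (hper : ∀ k, J (k + ℓ) = J k)
    {v : α} (hv : v ≠ s) : ℓ ≤ τ v * #{k ∈ Icc 1 ℓ | v ∈ J k} := by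
  have hP : Function.Periodic (v ∈ J ·) ℓ := fun k => by simp only [hper]
  have hIcc : Icc 1 ℓ = Ico 1 (1 + ℓ) := by ext; simp only [mem_Icc, mem_Ico]; omega
  rw [hIcc, Nat.filter_Ico_card_eq_of_periodic _ _ _ hP]
  exact le_mul_count_of_periodic hP (hfeas v hv)

theorem le_ttWeight_mul_card_filter {α : Type*} [DecidableEq α] {G : SimpleGraph α}
    (hG : G.IsTree) {s : α} {τ : α → ℕ} {J : ℕ → Finset α} {ℓ : ℕ}
    (hfeas : FeasibleTree s τ J) (hper : ∀ k, J (k + ℓ) = J k) {e : Sym2 α}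
    (he : e ∈ G.edgeSet) :
    ℓ ≤ ttWeight hG s τ e * #{k ∈ Icc 1 ℓ | ∃ v ∈ J k, e ∈ (treePath hG s v).edges} := by
  obtain ⟨j, hjs, hje⟩ := exists_ne_mem_edges_treePath hG s he
  obtain ⟨i, his, hie, hq⟩ := Nat.sInf_mem
    (s := {m | ∃ j, j ≠ s ∧ e ∈ (treePath hG s j).edges ∧ m = τ j}) ⟨τ j, j, hjs, hje, rfl⟩
  calc ℓ ≤ τ i * #{k ∈ Icc 1 ℓ | i ∈ J k} := hfeas.le_mul_card_filter_mem hper his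
    _ ≤ ttWeight hG s τ e * #{k ∈ Icc 1 ℓ | ∃ v ∈ J k, e ∈ (treePath hG s v).edges} := by
      rw [ttWeight, hq]
      gcongr with k
      exact fun hik => ⟨i, hik, hie⟩

theorem div_mul_le_mul_of_le_mul {a : ℝ} (ha : 0 ≤ a) {n q N : ℕ} (h : n ≤ q * N) :
    a / q * n ≤ a * N := by
  rcases q.eq_zero_or_pos with rfl | hq
  · simp only [Nat.cast_zero, div_zero, zero_mul]
    positivity
  · calc a / q * n ≤ a / q * (q * N) := by gcongr; exact_mod_cast h
      _ = a * N := by field_simp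

theorem tree_minAvg_lower_bound_general {α : Type*} [Fintype α] [DecidableEq α]
    {G : SimpleGraph α} [DecidableRel G.Adj] (hG : G.IsTree) (w : Sym2 α → ℝ)
    (hw : ∀ e ∈ G.edgeSet, 0 ≤ w e) (s : α) (τ : α → ℕ)
    (J : ℕ → Finset α) (ℓ : ℕ) (hℓ : 1 ≤ ℓ) (hper : ∀ k : ℕ, J (k + ℓ) = J k)
    (hfeas : FeasibleTree s τ J) :
    2 * ∑ e ∈ G.edgeFinset, w e / (ttWeight hG s τ e : ℝ) ≤
      (∑ k ∈ Finset.Icc 1 ℓ, tourCost (treeDist hG w) s (J k)) / (ℓ : ℝ) := by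
  rw [le_div_iff₀ (Nat.cast_pos.2 hℓ)]
  calc 2 * (∑ e ∈ G.edgeFinset, w e / ttWeight hG s τ e) * ℓ
      = ∑ e ∈ G.edgeFinset, 2 * (w e / ttWeight hG s τ e * ℓ) := by
        simp only [mul_sum, sum_mul, mul_assoc]
    _ ≤ ∑ e ∈ G.edgeFinset,
          2 * (w e * #{k ∈ Icc 1 ℓ | ∃ v ∈ J k, e ∈ (treePath hG s v).edges}) := by
        refine sum_le_sum fun e he => mul_le_mul_of_nonneg_left ?_ zero_le_two
        rw [mem_edgeFinset] at he
        exact div_mul_le_mul_of_le_mul (hw e he) (le_ttWeight_mul_card_filter hG hfeas hper he)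
    _ = ∑ k ∈ Icc 1 ℓ, ∑ e ∈ G.edgeFinset,
          if ∃ v ∈ J k, e ∈ (treePath hG s v).edges then 2 * w e else 0 := by
        rw [sum_comm]
        simp [sum_ite, mul_comm, mul_left_comm, mul_assoc]
    _ ≤ ∑ k ∈ Icc 1 ℓ, tourCost (treeDist hG w) s (J k) :=
        sum_le_sum fun k _ => sum_le_tourCost_treeDist hG hw s (J k)

/-- Lower bound for the average tour length on trees: every feasible periodic schedule
has average tour cost at least `L(G,τ) = 2 ∑_e c(e)/q(e)`. -/
theorem tree_minAvg_lower_bound {α : Type*} [Fintype α] [DecidableEq α]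
    {G : SimpleGraph α} [DecidableRel G.Adj] (hG : G.IsTree) (w : Sym2 α → ℝ)
    (hw : ∀ e ∈ G.edgeSet, 0 ≤ w e) (s : α) (τ : α → ℕ)
    (hτ : ∀ v : α, v ≠ s → 1 ≤ τ v)
    (J : ℕ → Finset α) (ℓ : ℕ) (hℓ : 1 ≤ ℓ) (hper : ∀ k : ℕ, J (k + ℓ) = J k)
    (hfeas : FeasibleTree s τ J) :
    2 * ∑ e ∈ G.edgeFinset, w e / (ttWeight hG s τ e : ℝ) ≤
      (∑ k ∈ Finset.Icc 1 ℓ, tourCost (treeDist hG w) s (J k)) / (ℓ : ℝ) :=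
  tree_minAvg_lower_bound_general hG w hw s τ J ℓ hℓ hper hfeas
end
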